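/- Let α₁: ℂ⁵ → M₄(ℂ) send (x₁,…,x₅) to the matrix with rows (−(3/8)x₅,0,0,0), (x₁,−(1/2)x₁−(3/8)x₅,0,x₄), (x₂,0,(5/8)x₅,x₃), (x₃,−(1/2)x₃,0,(1/8)x₅+(1/2)x₁), and let κ(x,y) = (3/2)(x₃y₁−x₁y₃)E₃₄. Define S⁰ = {v ∈ ℂ⁴ : κ(x,y)v = 0 ∀x,y} and Sᵏ = {v ∈ Sᵏ⁻¹ : α₁(x)v ∈ Sᵏ⁻¹ ∀x}. Then S⁰ = {v : v₄ = 0}, S¹ = {(z₁, 2z₁, z₃, 0) : z₁,z₃ ∈ ℂ}, and Sᵏ = S¹ for all k ≥ 1. -/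

import Mathlib

/-!
The curvature only acts through the coordinate `v 3`, which cuts out `S⁰`. On `S⁰` the last
coordinate of `α₁(x) v` is `x₂ (v₀ - v₁/2)`, which cuts out `S¹`. Finally `S¹` is invariant under
every `α₁(x)`, so the refinement step returns `S¹` unchanged from then on.
-/

open Matrix

noncomputable section

/-- The extension α₁ of the homogeneous C-projective structure. -/
def αC1 (x : Fin 5 → ℂ) : Matrix (Fin 4) (Fin 4) ℂ :=
  !![-(3/8) * x 4, 0, 0, 0;
     x 0, -(1/2) * x 0 - (3/8) * x 4, 0, x 3;
     x 1, 0, (5/8) * x 4, x 2;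
     x 2, -(1/2) * x 2, 0, (1/8) * x 4 + (1/2) * x 0]

/-- The curvature κ(x,y) = (3/2)(x₃y₁ − x₁y₃)E₃₄. -/
def κC (x y : Fin 5 → ℂ) : Matrix (Fin 4) (Fin 4) ℂ :=
  ((3/2) * (x 2 * y 0 - x 0 * y 2)) • Matrix.single (2 : Fin 4) (3 : Fin 4) (1 : ℂ)

/-- The sets S⁰ ⊇ S¹ ⊇ S² ⊇ ⋯ computing the solution space. -/
def S17 : ℕ → Set (Fin 4 → ℂ)
  | 0 => {v | ∀ x y : Fin 5 → ℂ, (κC x y).mulVec v = 0}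
  | (k + 1) => {v | v ∈ S17 k ∧ ∀ x : Fin 5 → ℂ, (αC1 x).mulVec v ∈ S17 k}

lemma κC_mulVec (x y : Fin 5 → ℂ) (v : Fin 4 → ℂ) :
    κC x y *ᵥ v = Pi.single 2 ((3/2) * (x 2 * y 0 - x 0 * y 2) * v 3) := by
  rw [κC, smul_mulVec, single_mulVec, ← Pi.single, ← Pi.single_smul, smul_eq_mul, one_mul,
    mul_assoc]

lemma αC1_mulVec (x : Fin 5 → ℂ) (v : Fin 4 → ℂ) :
    αC1 x *ᵥ v =
      ![-(3/8) * x 4 * v 0,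
        x 0 * v 0 - ((1/2) * x 0 + (3/8) * x 4) * v 1 + x 3 * v 3,
        x 1 * v 0 + (5/8) * x 4 * v 2 + x 2 * v 3,
        x 2 * (v 0 - (1/2) * v 1) + ((1/8) * x 4 + (1/2) * x 0) * v 3] := by
  ext i
  fin_cases i <;> simp [αC1, mulVec, dotProduct, Fin.sum_univ_four] <;> ring

lemma S17_zero : S17 0 = {v | v 3 = 0} := by
  ext v
  simp only [S17, κC_mulVec, Pi.single_eq_zero_iff, Set.mem_ofPred_eq]
  refine ⟨fun h => ?_, fun h x y => by rw [h, mul_zero]⟩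
  simpa using h ![0, 0, 1, 0, 0] ![1, 0, 0, 0, 0]

lemma S17_succ (k : ℕ) :
    S17 (k + 1) = {v | v ∈ S17 k ∧ ∀ x, αC1 x *ᵥ v ∈ S17 k} :=
  rfl

lemma S17_one : S17 1 = {v | v 1 = 2 * v 0 ∧ v 3 = 0} := by
  ext v
  simp only [S17_succ, S17_zero, Set.mem_ofPred_eq, αC1_mulVec, cons_val_three, tail_cons,
    head_cons]
  constructor
  · rintro ⟨h3, hα⟩
    have h := hα ![0, 0, 1, 0, 0]
    simp [h3] at h
    refine ⟨?_, h3⟩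
    linear_combination (-2 : ℂ) * h
  · rintro ⟨h1, h3⟩
    exact ⟨h3, fun x => by rw [h1, h3]; ring⟩

lemma αC1_mulVec_mem_S17_one {v : Fin 4 → ℂ} (hv : v ∈ S17 1) (x : Fin 5 → ℂ) :
    αC1 x *ᵥ v ∈ S17 1 := by
  rw [S17_one] at hv ⊢
  obtain ⟨h1, h3⟩ := hv
  constructor
  · simp only [αC1_mulVec, cons_val_zero, cons_val_one, h1, h3]
    ring
  · simp only [αC1_mulVec, cons_val_three, tail_cons, head_cons, h1, h3]
    ring

lemma S17_succ_eq_self {k : ℕ} (h : ∀ v ∈ S17 k, ∀ x, αC1 x *ᵥ v ∈ S17 k) :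
    S17 (k + 1) = S17 k :=
  (S17_succ k).trans <| Set.ext fun v => ⟨And.left, fun hv => ⟨hv, h v hv⟩⟩

theorem stmt17 :
    S17 0 = {v | v 3 = 0} ∧
    S17 1 = {v | v 1 = 2 * v 0 ∧ v 3 = 0} ∧
    (∀ k : ℕ, 1 ≤ k → S17 k = S17 1) := by
  refine ⟨S17_zero, S17_one, fun k hk => ?_⟩
  induction k, hk using Nat.le_induction with
  | base => rfl
  | succ k _ ih =>
    rw [S17_succ_eq_self (fun v hv => ih ▸ αC1_mulVec_mem_S17_one (ih ▸ hv)), ih]
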